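/- Let ρ_{θ₁},...,ρ_{θₙ} be linearly independent density matrices on a finite-dimensional Hilbert space, and Γ a map on them into density matrices such that for all ε > 0 and every finite-outcome POVM M there is a POVM M′ with Σ_t |tr Γ(ρ_{θᵢ})M(t) − tr ρ_{θᵢ} M′(t)| < ε for all i. Then the linear extension Γ′(Σᵢ aᵢ ρ_{θᵢ}) := Σᵢ aᵢ Γ(ρ_{θᵢ}) is positive on span{ρ_{θᵢ}}: Γ′(ρ) ≥ 0 whenever ρ = Σᵢ aᵢ ρ_{θᵢ} ≥ 0. -/

import Mathlib

/-!
Put `σ = Σ aᵢ Γ(ρ_{θᵢ})`. For an effect `0 ≤ P ≤ 1`, apply the statistical-morphism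
hypothesis to the two-outcome POVM `{P, 1 - P}`: it gives a POVM `M′` on the input side
such that `tr σ P` lies within `ε · Σ |aᵢ|` of `tr ρ M′(0)`, which is nonnegative
because `ρ = Σ aᵢ ρ_{θᵢ} ≥ 0`. Hence `Re tr σ P ≥ 0`. Taking for `P` the projection
onto a unit vector `y` gives `⟨y, σ y⟩ ≥ 0`.
-/

open Matrix Complex ComplexOrder

/-- A finite-outcome POVM: positive operators summing to the identity. -/
def IsPOVM {n k : ℕ} (M : Fin k → Matrix (Fin n) (Fin n) ℂ) : Prop :=
  (∀ t, (M t).PosSemidef) ∧ ∑ t, M t = 1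

namespace Matrix

variable {ι 𝕜 : Type*} [Fintype ι] [RCLike 𝕜]

open scoped MatrixOrder in
theorem PosSemidef.trace_mul_nonneg {A B : Matrix ι ι 𝕜} (hA : A.PosSemidef)
    (hB : B.PosSemidef) : 0 ≤ (A * B).trace := by
  classical
  obtain ⟨C, rfl⟩ := CStarAlgebra.nonneg_iff_eq_star_mul_self.mp hA.nonneg
  rw [mul_assoc, trace_mul_comm, star_eq_conjTranspose]
  exact (hB.mul_mul_conjTranspose_same C).trace_nonneg

theorem trace_sum_smul_mul {κ : Type*} [Fintype κ] (a : κ → 𝕜) (A : κ → Matrix ι ι 𝕜)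
    (B : Matrix ι ι 𝕜) : ((∑ i, a i • A i) * B).trace = ∑ i, a i * (A i * B).trace := by
  simp only [Finset.sum_mul, trace_sum, smul_mul_assoc, trace_smul, smul_eq_mul]

theorem trace_mul_vecMulVec_self_star (A : Matrix ι ι 𝕜) (y : ι → 𝕜) :
    (A * vecMulVec y (star y)).trace = star y ⬝ᵥ A *ᵥ y := by
  rw [mul_vecMulVec, trace_vecMulVec, dotProduct_comm]

theorem star_dotProduct_self_eq_norm_sq (x : ι → 𝕜) :
    star x ⬝ᵥ x = (‖WithLp.toLp 2 x‖ : 𝕜) ^ 2 := by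
  rw [← inner_self_eq_norm_sq_to_K, EuclideanSpace.inner_toLp_toLp, dotProduct_comm]

theorem exists_star_dotProduct_self_eq_one {x : ι → 𝕜} (hx : x ≠ 0) :
    ∃ (r : ℝ) (y : ι → 𝕜), 0 < r ∧ x = (r : 𝕜) • y ∧ star y ⬝ᵥ y = 1 := by
  have hr : 0 < ‖WithLp.toLp 2 x‖ := norm_pos_iff.mpr (by simpa using hx)
  have hr' : (‖WithLp.toLp 2 x‖ : 𝕜) ≠ 0 := by exact_mod_cast hr.ne'
  refine ⟨_, (‖WithLp.toLp 2 x‖⁻¹ : 𝕜) • x, hr, ?_, ?_⟩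
  · rw [smul_smul, mul_inv_cancel₀ hr', one_smul]
  · rw [star_smul, smul_dotProduct, dotProduct_smul, star_dotProduct_self_eq_norm_sq]
    simp only [smul_eq_mul, RCLike.star_def, map_inv₀, RCLike.conj_ofReal]
    field_simp

theorem isIdempotentElem_vecMulVec_self_star {y : ι → 𝕜} (hy : star y ⬝ᵥ y = 1) :
    IsIdempotentElem (vecMulVec y (star y)) := by
  rw [IsIdempotentElem, vecMulVec_mul_vecMulVec, hy, one_smul]

theorem IsHermitian.posSemidef_of_isIdempotentElem {P : Matrix ι ι 𝕜} (hP : P.IsHermitian)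
    (hPP : IsIdempotentElem P) : P.PosSemidef := by
  have hP_eq : P = Pᴴ * P := by rw [hP.eq, hPP.eq]
  exact hP_eq ▸ posSemidef_conjTranspose_mul_self P

theorem posSemidef_one_sub_vecMulVec_self_star [DecidableEq ι] {y : ι → 𝕜}
    (hy : star y ⬝ᵥ y = 1) : (1 - vecMulVec y (star y)).PosSemidef :=
  IsHermitian.posSemidef_of_isIdempotentElem
    (isHermitian_one.sub (posSemidef_vecMulVec_self_star y).isHermitian)
    (isIdempotentElem_vecMulVec_self_star hy).one_sub

theorem IsHermitian.posSemidef_of_re_trace_mul_nonneg [DecidableEq ι] {A : Matrix ι ι 𝕜}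
    (hA : A.IsHermitian)
    (h : ∀ P : Matrix ι ι 𝕜, P.PosSemidef → (1 - P).PosSemidef → 0 ≤ RCLike.re (A * P).trace) :
    A.PosSemidef := by
  refine .of_dotProduct_mulVec_nonneg hA fun x => ?_
  rw [RCLike.nonneg_iff, hA.im_star_dotProduct_mulVec_self]
  refine ⟨?_, rfl⟩
  rcases eq_or_ne x 0 with rfl | hx
  · simp
  obtain ⟨r, y, hr, rfl, hy⟩ := exists_star_dotProduct_self_eq_one hx
  have hy_nonneg : 0 ≤ RCLike.re (star y ⬝ᵥ A *ᵥ y) := by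
    simpa only [trace_mul_vecMulVec_self_star] using
      h _ (posSemidef_vecMulVec_self_star y) (posSemidef_one_sub_vecMulVec_self_star hy)
  simp only [star_smul, mulVec_smul, smul_dotProduct, dotProduct_smul, smul_eq_mul,
    RCLike.star_def, RCLike.conj_ofReal, RCLike.re_ofReal_mul]
  positivity

end Matrix

theorem norm_sum_mul_sub_sum_mul_le {ι R : Type*} [Fintype ι] [SeminormedRing R]
    (a x y : ι → R) {δ : ℝ} (h : ∀ i, ‖x i - y i‖ ≤ δ) :
    ‖∑ i, a i * x i - ∑ i, a i * y i‖ ≤ (∑ i, ‖a i‖) * δ := by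
  rw [← Finset.sum_sub_distrib, Finset.sum_mul]
  refine (norm_sum_le _ _).trans (Finset.sum_le_sum fun i _ => ?_)
  rw [← mul_sub]
  exact (norm_mul_le _ _).trans (mul_le_mul_of_nonneg_left (h i) (norm_nonneg _))

theorem isPOVM_pair {n : ℕ} {P : Matrix (Fin n) (Fin n) ℂ} (hP : P.PosSemidef)
    (hP' : (1 - P).PosSemidef) : IsPOVM ![P, 1 - P] :=
  ⟨Fin.forall_fin_two.mpr ⟨hP, hP'⟩, by simp⟩

def IsStatisticalMorphism {n n' m : ℕ} (ρ : Fin m → Matrix (Fin n) (Fin n) ℂ)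
    (Γ : Fin m → Matrix (Fin n') (Fin n') ℂ) : Prop :=
  ∀ ε > (0 : ℝ), ∀ k : ℕ, ∀ M : Fin k → Matrix (Fin n') (Fin n') ℂ,
    IsPOVM M → ∃ M' : Fin k → Matrix (Fin n) (Fin n) ℂ, IsPOVM M' ∧
      ∀ i, ∑ t, ‖(Γ i * M t).trace - (ρ i * M' t).trace‖ < ε

namespace IsStatisticalMorphism

variable {n n' m : ℕ} {ρ : Fin m → Matrix (Fin n) (Fin n) ℂ}
  {Γ : Fin m → Matrix (Fin n') (Fin n') ℂ} {k : ℕ} {M : Fin k → Matrix (Fin n') (Fin n') ℂ}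

theorem exists_isPOVM_norm_trace_sub_le (hmor : IsStatisticalMorphism ρ Γ) (a : Fin m → ℂ)
    (hM : IsPOVM M) (t : Fin k) {ε : ℝ} (hε : 0 < ε) :
    ∃ M' : Fin k → Matrix (Fin n) (Fin n) ℂ, IsPOVM M' ∧
      ‖((∑ i, a i • Γ i) * M t).trace - ((∑ i, a i • ρ i) * M' t).trace‖ ≤ ε := by
  set K := ∑ i, ‖a i‖
  have hK : 0 ≤ K := Finset.sum_nonneg fun i _ => norm_nonneg _
  obtain ⟨M', hM', hclose⟩ := hmor (ε / (K + 1)) (by positivity) k M hM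
  have hclose_t : ∀ i, ‖(Γ i * M t).trace - (ρ i * M' t).trace‖ ≤ ε / (K + 1) := fun i =>
    (Finset.single_le_sum (f := fun s => ‖(Γ i * M s).trace - (ρ i * M' s).trace‖)
      (fun _ _ => norm_nonneg _) (Finset.mem_univ t)).trans (hclose i).le
  refine ⟨M', hM', ?_⟩
  calc _ ≤ K * (ε / (K + 1)) := by
        rw [trace_sum_smul_mul, trace_sum_smul_mul]
        exact norm_sum_mul_sub_sum_mul_le _ _ _ hclose_t
    _ ≤ (K + 1) * (ε / (K + 1)) := by gcongr; linarith
    _ = ε := mul_div_cancel₀ _ (by positivity)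

theorem re_trace_mul_nonneg (hmor : IsStatisticalMorphism ρ Γ) {a : Fin m → ℂ}
    (ha : (∑ i, a i • ρ i).PosSemidef) (hM : IsPOVM M) (t : Fin k) :
    0 ≤ ((∑ i, a i • Γ i) * M t).trace.re := by
  refine le_of_forall_pos_le_add fun ε hε => ?_
  obtain ⟨M', hM', hdist⟩ := hmor.exists_isPOVM_norm_trace_sub_le a hM t hε
  have hρ_nonneg := (Complex.nonneg_iff.mp (ha.trace_mul_nonneg (hM'.1 t))).1
  have hre := (abs_le.mp ((Complex.abs_re_le_norm _).trans hdist)).1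
  rw [Complex.sub_re] at hre
  linarith

end IsStatisticalMorphism

theorem statistical_morphism_positive_general {n n' m : ℕ}
    (ρ : Fin m → Matrix (Fin n) (Fin n) ℂ)
    (Γ : Fin m → Matrix (Fin n') (Fin n') ℂ)
    (hΓ : ∀ i, (Γ i).PosSemidef ∧ (Γ i).trace = 1)
    (hmor : ∀ ε > (0 : ℝ), ∀ k : ℕ, ∀ M : Fin k → Matrix (Fin n') (Fin n') ℂ,
      IsPOVM M → ∃ M' : Fin k → Matrix (Fin n) (Fin n) ℂ, IsPOVM M' ∧
        ∀ i, ∑ t, ‖(Γ i * M t).trace - (ρ i * M' t).trace‖ < ε) :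
    ∀ a : Fin m → ℝ,
      (∑ i, (a i : ℂ) • ρ i).PosSemidef → (∑ i, (a i : ℂ) • Γ i).PosSemidef := by
  intro a ha
  have hσ : (∑ i, (a i : ℂ) • Γ i).IsHermitian :=
    isSelfAdjoint_sum _ fun i _ => (hΓ i).1.isHermitian.smul (Complex.conj_ofReal (a i))
  refine hσ.posSemidef_of_re_trace_mul_nonneg fun P hP hP' => ?_
  exact IsStatisticalMorphism.re_trace_mul_nonneg hmor ha (isPOVM_pair hP hP') 0

/-- If `ρ_{θ₁},…,ρ_{θ_m}` are linearly independent density matrices and `Γ` is a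
statistical morphism on them, then the linear extension
`Γ′(Σ aᵢ ρ_{θᵢ}) = Σ aᵢ Γ(ρ_{θᵢ})` is positive on their span. -/
theorem statistical_morphism_positive {n n' m : ℕ}
    (ρ : Fin m → Matrix (Fin n) (Fin n) ℂ)
    (hρ : ∀ i, (ρ i).PosSemidef ∧ (ρ i).trace = 1)
    (hli : LinearIndependent ℝ ρ)
    (Γ : Fin m → Matrix (Fin n') (Fin n') ℂ)
    (hΓ : ∀ i, (Γ i).PosSemidef ∧ (Γ i).trace = 1)
    (hmor : ∀ ε > (0 : ℝ), ∀ k : ℕ, ∀ M : Fin k → Matrix (Fin n') (Fin n') ℂ,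
      IsPOVM M → ∃ M' : Fin k → Matrix (Fin n) (Fin n) ℂ, IsPOVM M' ∧
        ∀ i, ∑ t, ‖(Γ i * M t).trace - (ρ i * M' t).trace‖ < ε) :
    ∀ a : Fin m → ℝ,
      (∑ i, (a i : ℂ) • ρ i).PosSemidef → (∑ i, (a i : ℂ) • Γ i).PosSemidef :=
  statistical_morphism_positive_general ρ Γ hΓ hmor
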